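/- In infinite Mastermind (with or without duplication, at least two colors), no codebreaker strategy wins at a finite stage for all codewords: every strategy, being a function of the countably-many-valued feedback, produces only countably many possible guesswords across all finite plays, while there are uncountably many codewords. -/
import Mathlib


/-- Permutations acting only on the incorrect positions of `s` against `w`. -/
def IncorrectPerm {α : Type*} (s w : ℕ → α) : Type :=
  {π : Equiv.Perm ℕ // ∀ n : ℕ, s n = w n → π n = n}

instance {α : Type*} (s w : ℕ → α) : Nonempty (IncorrectPerm s w) :=
  ⟨⟨Equiv.refl ℕ, fun _ _ => rfl⟩⟩

/-- The rearrangement count `ρ`. -/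
noncomputable def rearrangeCount {α : Type*} (s w : ℕ → α) : Cardinal :=
  ⨆ π : IncorrectPerm s w,
    Cardinal.mk {m : ℕ | s m ≠ w m ∧ s ((π.1).symm m) = w m}

/-- The inherent error count `ε`. -/
noncomputable def errorCount {α : Type*} (s w : ℕ → α) : Cardinal :=
  ⨅ π : IncorrectPerm s w, Cardinal.mk {m : ℕ | s ((π.1).symm m) ≠ w m}

/-- The Mastermind feedback `(κ, ρ, ε)` of the guess `s` against `w`. -/
noncomputable def masterFeedback {α : Type*} (s w : ℕ → α) :
    Cardinal × Cardinal × Cardinal :=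
  (Cardinal.mk {n : ℕ | s n = w n}, rearrangeCount s w, errorCount s w)

/-- The history of feedback triples produced after `k` guesses when the
strategy `σ` plays against the codeword `w`. -/
noncomputable def feedbackHistory {α : Type*}
    (σ : List (Cardinal × Cardinal × Cardinal) → (ℕ → α)) (w : ℕ → α) :
    ℕ → List (Cardinal × Cardinal × Cardinal)
  | 0 => []
  | k + 1 =>
      feedbackHistory σ w k ++ [masterFeedback (σ (feedbackHistory σ w k)) w]


abbrev CtbCard : Type 1 := {c : Cardinal.{0} // c ≤ Cardinal.aleph0.{0}}

instance : Countable CtbCard := by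
  have h : {c : Cardinal.{0} | c ≤ Cardinal.aleph0.{0}}.Countable := by
    have : {c : Cardinal.{0} | c ≤ Cardinal.aleph0.{0}} ⊆
        insert Cardinal.aleph0.{0} (Set.range fun n : ℕ => (n : Cardinal.{0})) := by
      intro c hc
      have hc' : c ≤ Cardinal.aleph0.{0} := hc
      rcases lt_or_eq_of_le hc' with h | h
      · rcases Cardinal.lt_aleph0.1 h with ⟨n, rfl⟩
        exact Set.mem_insert_of_mem _ ⟨n, rfl⟩
      · exact h ▸ Set.mem_insert _ _
    exact (Set.countable_range _).insert _ |>.mono this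
  exact h

lemma feedback_le {α : Type*} (s w : ℕ → α) :
    (masterFeedback s w).1 ≤ Cardinal.aleph0.{0} ∧
    (masterFeedback s w).2.1 ≤ Cardinal.aleph0.{0} ∧
    (masterFeedback s w).2.2 ≤ Cardinal.aleph0.{0} := by
  refine ⟨Cardinal.mk_le_aleph0, ?_, ?_⟩
  · exact ciSup_le' fun π => Cardinal.mk_le_aleph0
  · exact (ciInf_le' _ ⟨Equiv.refl ℕ, fun _ _ => rfl⟩).trans Cardinal.mk_le_aleph0

lemma feedbackHistory_mem {α : Type*}
    (σ : List (Cardinal × Cardinal × Cardinal) → (ℕ → α)) (w : ℕ → α) (k : ℕ) :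
    ∃ l : List (CtbCard × CtbCard × CtbCard),
      l.map (fun p => (p.1.1, p.2.1.1, p.2.2.1)) = feedbackHistory σ w k := by
  induction k with
  | zero => exact ⟨[], rfl⟩
  | succ k ih =>
      obtain ⟨l, hl⟩ := ih
      obtain ⟨h1, h2, h3⟩ := feedback_le (σ (feedbackHistory σ w k)) w
      refine ⟨l ++ [(⟨_, h1⟩, ⟨_, h2⟩, ⟨_, h3⟩)], ?_⟩
      simp [feedbackHistory, hl, masterFeedback]

/-- In infinite Mastermind with at least two colors, no codebreaker strategy
(a function of the feedback history) wins at a finite stage against every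
codeword: some codeword is never guessed at any finite stage. -/
theorem mastermind_no_finite_stage_strategy (α : Type*) [Nontrivial α]
    (σ : List (Cardinal × Cardinal × Cardinal) → (ℕ → α)) :
    ∃ w : ℕ → α, ∀ k : ℕ, σ (feedbackHistory σ w k) ≠ w := by
  set g : List (CtbCard × CtbCard × CtbCard) → (ℕ → α) :=
    fun l => σ (l.map fun p => (p.1.1, p.2.1.1, p.2.2.1)) with hg
  have hS : (Set.range g).Countable := Set.countable_range g
  have hbig : Cardinal.aleph0.{u_1} < Cardinal.mk (ℕ → α) := by
    calc Cardinal.aleph0.{u_1} < 2 ^ Cardinal.aleph0.{u_1} := Cardinal.cantor _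
    _ ≤ Cardinal.mk α ^ Cardinal.aleph0.{u_1} := by
        apply Cardinal.power_le_power_right
        exact Cardinal.two_le_iff.2 (exists_pair_ne α)
    _ = Cardinal.mk (ℕ → α) := by
        rw [Cardinal.mk_arrow, Cardinal.mk_nat, Cardinal.lift_aleph0, Cardinal.lift_uzero]
  have : Set.range g ≠ Set.univ := by
    intro h
    have := hS.mono (h.ge.trans (le_of_eq rfl))
    rw [h] at hS
    have : Cardinal.mk (ℕ → α) ≤ Cardinal.aleph0.{u_1} := by
      have := hS
      rwa [Set.countable_univ_iff, ← Cardinal.mk_le_aleph0_iff] at this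
    exact absurd this (not_le.2 hbig)
  obtain ⟨w, hw⟩ := (Set.ne_univ_iff_exists_notMem _).1 this
  refine ⟨w, fun k hk => hw ?_⟩
  obtain ⟨l, hl⟩ := feedbackHistory_mem σ w k
  exact ⟨l, by rw [hg]; simp only [hl]; exact hk⟩
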